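/- Let X_1, X_2, Z, F_1,...,F_r be finite random variables such that for every i in [1:r] the Markov chain F_i - F_{[1:i-1]} X_{(i)_2} - Z X_{(i+1)_2} holds. Then for every a in [1:r], Sum_{i=a}^r ( I(F_i; X_{(i+1)_2} | F_{[1:i-1]}) - I(F_i; Z | F_{[1:i-1]}) ) = I(X_1;X_2 | F_{[1:a-1]}) - I(X_1;X_2 | F_{[1:r]}) - I(F_{[1:r]}; Z | F_{[1:a-1]}). -/

import Mathlib

open scoped BigOperators

namespace InfoTheory

variable {Ω : Type*} [Fintype Ω]

/-- `p` is a probability mass function on the finite type `Ω`. -/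
def IsPMF (p : Ω → ℝ) : Prop := (∀ ω, 0 ≤ p ω) ∧ ∑ ω, p ω = 1

/-- Distribution of the random variable `A` under `p`. -/
noncomputable def rvDist {α : Type*} [Fintype α] [DecidableEq α]
    (p : Ω → ℝ) (A : Ω → α) (a : α) : ℝ :=
  ∑ ω, if A ω = a then p ω else 0

/-- Shannon entropy (base 2) of the random variable `A` under `p`. -/
noncomputable def entH {α : Type*} [Fintype α] [DecidableEq α]
    (p : Ω → ℝ) (A : Ω → α) : ℝ :=
  -∑ a, rvDist p A a * Real.logb 2 (rvDist p A a)

/-- Conditional entropy `H(A|B)`. -/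
noncomputable def condH {α β : Type*} [Fintype α] [DecidableEq α] [Fintype β] [DecidableEq β]
    (p : Ω → ℝ) (A : Ω → α) (B : Ω → β) : ℝ :=
  entH p (fun ω => (A ω, B ω)) - entH p B

/-- Mutual information `I(A;B)`. -/
noncomputable def mi {α β : Type*} [Fintype α] [DecidableEq α] [Fintype β] [DecidableEq β]
    (p : Ω → ℝ) (A : Ω → α) (B : Ω → β) : ℝ :=
  entH p A + entH p B - entH p (fun ω => (A ω, B ω))

/-- Conditional mutual information `I(A;B|C)`. -/
noncomputable def cmi {α β γ : Type*} [Fintype α] [DecidableEq α] [Fintype β] [DecidableEq β]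
    [Fintype γ] [DecidableEq γ]
    (p : Ω → ℝ) (A : Ω → α) (B : Ω → β) (C : Ω → γ) : ℝ :=
  condH p A C + condH p B C - condH p (fun ω => (A ω, B ω)) C

/-- Markov chain `A - B - C`: `A` and `C` are conditionally independent given `B`. -/
def Markov {α β γ : Type*} [Fintype α] [DecidableEq α] [Fintype β] [DecidableEq β]
    [Fintype γ] [DecidableEq γ]
    (p : Ω → ℝ) (A : Ω → α) (B : Ω → β) (C : Ω → γ) : Prop :=
  ∀ a b c, rvDist p (fun ω => ((A ω, B ω), C ω)) ((a, b), c) * rvDist p B b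
    = rvDist p (fun ω => (A ω, B ω)) (a, b) * rvDist p (fun ω => (B ω, C ω)) (b, c)

/-- Total variation distance between two pmfs on the finite type `α`. -/
noncomputable def TV {α : Type*} [Fintype α] (p q : α → ℝ) : ℝ :=
  (∑ a, |p a - q a|) / 2

/-- The prefix `F_{[1:k]}` of a finite family of random variables, encoded by replacing
the coordinates beyond `k` by `none`. -/
def Fpre {r : ℕ} {𝓕 : Fin r → Type*} (F : ∀ i : Fin r, Ω → 𝓕 i) (k : ℕ) :
    Ω → ∀ j : Fin r, Option (𝓕 j) :=
  fun ω j => if (j : ℕ) < k then some (F j ω) else none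

/-- The full tuple `F_{[1:r]}`. -/
def Ffull {r : ℕ} {𝓕 : Fin r → Type*} (F : ∀ i : Fin r, Ω → 𝓕 i) :
    Ω → ∀ j : Fin r, 𝓕 j :=
  fun ω j => F j ω

end InfoTheory

open InfoTheory

/-! Each round telescopes. Writing `W = F_{[1:i-1]}`, the chain rule applied to `I(F_i X; Y | W)`
in both orders, together with `I(F_i; Y | W X) = 0` (the Markov chain), gives
`I(F_i; Y | W) = I(X; Y | W) - I(X; Y | W F_i)`; and since `F_{[1:r]}` determines `F_i`,
`I(F_{[1:r]}; Z | W) = I(F_i; Z | W) + I(F_{[1:r]}; Z | W F_i)`. So the `i`-th summand is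
`g(i-1) - g(i)` for `g(k) = I(X_1; X_2 | F_{[1:k]}) - I(F_{[1:r]}; Z | F_{[1:k]})`,
and `I(F_{[1:r]}; Z | F_{[1:r]}) = 0`. -/

lemma Fin.sum_Ici_sub {G : Type*} [AddCommGroup G] {r : ℕ} (g : ℕ → G) (a : Fin r) :
    ∑ i ∈ Finset.Ici a, (g i - g (i + 1)) = g a - g r := by
  have hmap := Finset.sum_map (Finset.Ici a) Fin.valEmbedding (fun k => g k - g (k + 1))
  simp only [Fin.map_valEmbedding_Ici, Fin.valEmbedding_apply] at hmap
  rw [← hmap, ← neg_sub, ← Finset.sum_Ico_sub g a.isLt.le, ← Finset.sum_neg_distrib]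
  simp only [neg_sub]

namespace InfoTheory

section Prefix

variable {Ω : Type*} {r : ℕ} {𝓕 : Fin r → Type*} (F : ∀ i : Fin r, Ω → 𝓕 i)

lemma Fpre_eq_iff {k : ℕ} {ω ω' : Ω} :
    Fpre F k ω = Fpre F k ω' ↔ ∀ j : Fin r, (j : ℕ) < k → F j ω = F j ω' := by
  simp only [Fpre, funext_iff]
  refine forall_congr' fun j => ?_
  split_ifs with hj <;> simp [hj]

lemma Fpre_succ_eq_iff (i : Fin r) (ω ω' : Ω) :
    Fpre F (i + 1) ω = Fpre F (i + 1) ω' ↔ Fpre F i ω = Fpre F i ω' ∧ F i ω = F i ω' := by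
  simp only [Fpre_eq_iff, Nat.lt_succ_iff_lt_or_eq, or_imp, forall_and, Fin.val_inj, forall_eq]

end Prefix

section Entropy

variable {Ω α β γ δ : Type*} [Fintype Ω] [Fintype α] [DecidableEq α] [Fintype β] [DecidableEq β]
  [Fintype γ] [DecidableEq γ] [Fintype δ] [DecidableEq δ]

lemma le_rvDist_apply {p : Ω → ℝ} (hp : ∀ ω, 0 ≤ p ω) (A : Ω → α) (ω : Ω) :
    p ω ≤ rvDist p A (A ω) := by
  have := Finset.single_le_sum (f := fun ω' => if A ω' = A ω then p ω' else 0)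
    (fun ω' _ => by split_ifs <;> simp [hp ω']) (Finset.mem_univ ω)
  simpa [rvDist] using this

lemma entH_eq_sum (p : Ω → ℝ) (A : Ω → α) :
    entH p A = -∑ ω, p ω * Real.logb 2 (rvDist p A (A ω)) := by
  set L := fun a => Real.logb 2 (rvDist p A a)
  calc entH p A = -∑ a, ∑ ω, if A ω = a then p ω * L a else 0 := by
        simp only [entH, rvDist, Finset.sum_mul, ite_mul, zero_mul, L]
    _ = -∑ ω, ∑ a, if A ω = a then p ω * L a else 0 := by rw [Finset.sum_comm]
    _ = -∑ ω, p ω * L (A ω) := by simp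

lemma entH_congr (p : Ω → ℝ) {A : Ω → α} {B : Ω → β}
    (h : ∀ ω ω', A ω = A ω' ↔ B ω = B ω') : entH p A = entH p B := by
  simp only [entH_eq_sum, rvDist, h]

lemma entH_prod_of_markov {p : Ω → ℝ} (hp : ∀ ω, 0 ≤ p ω) {A : Ω → α} {B : Ω → β}
    {C : Ω → γ} (h : Markov p A B C) :
    entH p (fun ω => ((A ω, B ω), C ω))
      = entH p (fun ω => (A ω, B ω)) + entH p (fun ω => (B ω, C ω)) - entH p B := by
  have key : ∀ ω, p ω * Real.logb 2 (rvDist p (fun ω => ((A ω, B ω), C ω)) ((A ω, B ω), C ω))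
      = p ω * Real.logb 2 (rvDist p (fun ω => (A ω, B ω)) (A ω, B ω))
        + p ω * Real.logb 2 (rvDist p (fun ω => (B ω, C ω)) (B ω, C ω))
        - p ω * Real.logb 2 (rvDist p B (B ω)) := by
    intro ω
    rcases (hp ω).eq_or_lt with hω | hω
    · simp [← hω]
    have hAB := hω.trans_le (le_rvDist_apply hp (fun ω => (A ω, B ω)) ω)
    have hBC := hω.trans_le (le_rvDist_apply hp (fun ω => (B ω, C ω)) ω)
    have hB := hω.trans_le (le_rvDist_apply hp B ω)
    have hfactor := (eq_div_iff hB.ne').2 (h (A ω) (B ω) (C ω))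
    rw [hfactor, Real.logb_div (mul_pos hAB hBC).ne' hB.ne',
      Real.logb_mul hAB.ne' hBC.ne']
    ring
  simp only [entH_eq_sum, key, Finset.sum_add_distrib, Finset.sum_sub_distrib]
  ring

lemma rvDist_prod_eq_sum (p : Ω → ℝ) (X : Ω → α) (C : Ω → β) (D : Ω → γ) (x : α) (d : γ) :
    rvDist p (fun ω => (X ω, D ω)) (x, d)
      = ∑ c, rvDist p (fun ω => (X ω, (C ω, D ω))) (x, (c, d)) := by
  simp only [rvDist]
  rw [Finset.sum_comm]
  refine Finset.sum_congr rfl fun ω _ => ?_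
  simp only [Prod.mk.injEq]
  by_cases hx : X ω = x <;> by_cases hd : D ω = d <;> simp [hx, hd]

lemma Markov.snd_right {p : Ω → ℝ} {A : Ω → α}
    {B : Ω → β} {C : Ω → γ} {D : Ω → δ} (h : Markov p A B (fun ω => (C ω, D ω))) :
    Markov p A B D := by
  intro a b d
  rw [rvDist_prod_eq_sum p _ C, rvDist_prod_eq_sum p B C, Finset.sum_mul, Finset.mul_sum]
  exact Finset.sum_congr rfl fun c _ => h a b (c, d)

lemma cmi_eq_entH (p : Ω → ℝ) (A : Ω → α) (B : Ω → β) (C : Ω → γ) :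
    cmi p A B C = entH p (fun ω => (A ω, C ω)) + entH p (fun ω => (B ω, C ω))
      - entH p (fun ω => ((A ω, B ω), C ω)) - entH p C := by
  simp only [cmi, condH]
  ring

lemma cmi_comm (p : Ω → ℝ) (A : Ω → α) (B : Ω → β) (C : Ω → γ) :
    cmi p A B C = cmi p B A C := by
  have h : entH p (fun ω => ((A ω, B ω), C ω)) = entH p (fun ω => ((B ω, A ω), C ω)) :=
    entH_congr p fun ω ω' => by simp only [Prod.mk.injEq]; tauto
  rw [cmi_eq_entH, cmi_eq_entH, h]
  ring

lemma cmi_congr_left (p : Ω → ℝ) {A : Ω → α} {A' : Ω → δ} (B : Ω → β) (C : Ω → γ)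
    (h : ∀ ω ω', A ω = A ω' ↔ A' ω = A' ω') : cmi p A B C = cmi p A' B C := by
  have hAC : entH p (fun ω => (A ω, C ω)) = entH p (fun ω => (A' ω, C ω)) :=
    entH_congr p fun ω ω' => by simp only [Prod.mk.injEq, h]
  have hABC : entH p (fun ω => ((A ω, B ω), C ω)) = entH p (fun ω => ((A' ω, B ω), C ω)) :=
    entH_congr p fun ω ω' => by simp only [Prod.mk.injEq, h]
  rw [cmi_eq_entH, cmi_eq_entH, hAC, hABC]

lemma cmi_congr_right (p : Ω → ℝ) (A : Ω → α) (B : Ω → β) {C : Ω → γ} {C' : Ω → δ}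
    (h : ∀ ω ω', C ω = C ω' ↔ C' ω = C' ω') : cmi p A B C = cmi p A B C' := by
  have hAC : entH p (fun ω => (A ω, C ω)) = entH p (fun ω => (A ω, C' ω)) :=
    entH_congr p fun ω ω' => by simp only [Prod.mk.injEq, h]
  have hBC : entH p (fun ω => (B ω, C ω)) = entH p (fun ω => (B ω, C' ω)) :=
    entH_congr p fun ω ω' => by simp only [Prod.mk.injEq, h]
  have hABC : entH p (fun ω => ((A ω, B ω), C ω)) = entH p (fun ω => ((A ω, B ω), C' ω)) :=
    entH_congr p fun ω ω' => by simp only [Prod.mk.injEq, h]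
  rw [cmi_eq_entH, cmi_eq_entH, hAC, hBC, hABC, entH_congr p h]

lemma cmi_prod_left (p : Ω → ℝ) (A : Ω → α) (A' : Ω → δ) (B : Ω → β) (C : Ω → γ) :
    cmi p (fun ω => (A ω, A' ω)) B C = cmi p A B C + cmi p A' B (fun ω => (C ω, A ω)) := by
  have h₁ : entH p (fun ω => (A' ω, C ω, A ω)) = entH p (fun ω => ((A ω, A' ω), C ω)) :=
    entH_congr p fun ω ω' => by simp only [Prod.mk.injEq]; tauto
  have h₂ : entH p (fun ω => (B ω, C ω, A ω)) = entH p (fun ω => ((A ω, B ω), C ω)) :=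
    entH_congr p fun ω ω' => by simp only [Prod.mk.injEq]; tauto
  have h₃ : entH p (fun ω => ((A' ω, B ω), C ω, A ω))
      = entH p (fun ω => (((A ω, A' ω), B ω), C ω)) :=
    entH_congr p fun ω ω' => by simp only [Prod.mk.injEq]; tauto
  have h₄ : entH p (fun ω => (C ω, A ω)) = entH p (fun ω => (A ω, C ω)) :=
    entH_congr p fun ω ω' => by simp only [Prod.mk.injEq]; tauto
  rw [cmi_eq_entH, cmi_eq_entH, cmi_eq_entH, h₁, h₂, h₃, h₄]
  ring

lemma cmi_eq_zero_of_markov {p : Ω → ℝ} (hp : ∀ ω, 0 ≤ p ω) {A : Ω → α} {B : Ω → β}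
    {C : Ω → γ} (h : Markov p A B C) : cmi p A C B = 0 := by
  have hCB : entH p (fun ω => (C ω, B ω)) = entH p (fun ω => (B ω, C ω)) :=
    entH_congr p fun ω ω' => by simp only [Prod.mk.injEq]; tauto
  have hACB : entH p (fun ω => ((A ω, C ω), B ω)) = entH p (fun ω => ((A ω, B ω), C ω)) :=
    entH_congr p fun ω ω' => by simp only [Prod.mk.injEq]; tauto
  rw [cmi_eq_entH, hCB, hACB, entH_prod_of_markov hp h]
  ring

lemma cmi_eq_zero_of_determines (p : Ω → ℝ) {A : Ω → α} (B : Ω → β) {C : Ω → γ}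
    (h : ∀ ω ω', C ω = C ω' → A ω = A ω') : cmi p A B C = 0 := by
  have hAC : entH p (fun ω => (A ω, C ω)) = entH p C :=
    entH_congr p fun ω ω' => by simp only [Prod.mk.injEq]; grind
  have hABC : entH p (fun ω => ((A ω, B ω), C ω)) = entH p (fun ω => (B ω, C ω)) :=
    entH_congr p fun ω ω' => by simp only [Prod.mk.injEq]; grind
  rw [cmi_eq_entH, hAC, hABC]
  ring

lemma cmi_eq_sub_of_markov {p : Ω → ℝ} (hp : ∀ ω, 0 ≤ p ω) {A : Ω → α} {X : Ω → β}
    {Y : Ω → γ} {W : Ω → δ} (h : Markov p A (fun ω => (W ω, X ω)) Y) :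
    cmi p A Y W = cmi p X Y W - cmi p X Y (fun ω => (W ω, A ω)) := by
  have hAX := cmi_prod_left p A X Y W
  have hXA := cmi_prod_left p X A Y W
  have hswap : cmi p (fun ω => (A ω, X ω)) Y W = cmi p (fun ω => (X ω, A ω)) Y W :=
    cmi_congr_left p Y W fun ω ω' => by simp only [Prod.mk.injEq]; tauto
  have hzero : cmi p A Y (fun ω => (W ω, X ω)) = 0 := cmi_eq_zero_of_markov hp h
  linarith

lemma cmi_eq_add_of_determines (p : Ω → ℝ) {R : Ω → α} {A : Ω → β} (Z : Ω → γ) (W : Ω → δ)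
    (h : ∀ ω ω', R ω = R ω' → A ω = A ω') :
    cmi p R Z W = cmi p A Z W + cmi p R Z (fun ω => (W ω, A ω)) := by
  rw [← cmi_prod_left]
  exact cmi_congr_left p Z W fun ω ω' => by simp only [Prod.mk.injEq]; grind

end Entropy

lemma cmi_Fpre_succ {Ω 𝒰 𝒱 : Type*} [Fintype Ω] [Fintype 𝒰] [DecidableEq 𝒰]
    [Fintype 𝒱] [DecidableEq 𝒱] {r : ℕ} {𝓕 : Fin r → Type*}
    [∀ i, Fintype (𝓕 i)] [∀ i, DecidableEq (𝓕 i)] (p : Ω → ℝ) (U : Ω → 𝒰) (V : Ω → 𝒱)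
    (F : ∀ i : Fin r, Ω → 𝓕 i) (i : Fin r) :
    cmi p U V (fun ω => (Fpre F i ω, F i ω)) = cmi p U V (Fpre F (i + 1)) :=
  cmi_congr_right p U V fun ω ω' => by rw [Fpre_succ_eq_iff, Prod.mk.injEq]

lemma cmi_sub_cmi_eq_of_markov {Ω 𝒳 𝒴 𝒵 : Type*} [Fintype Ω] [Fintype 𝒳] [DecidableEq 𝒳]
    [Fintype 𝒴] [DecidableEq 𝒴] [Fintype 𝒵] [DecidableEq 𝒵] {r : ℕ} {𝓕 : Fin r → Type*}
    [∀ i, Fintype (𝓕 i)] [∀ i, DecidableEq (𝓕 i)] {p : Ω → ℝ} (hp : ∀ ω, 0 ≤ p ω)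
    {X : Ω → 𝒳} {Y : Ω → 𝒴} {Z : Ω → 𝒵} {F : ∀ i : Fin r, Ω → 𝓕 i} {i : Fin r}
    (h : Markov p (F i) (fun ω => (Fpre F i ω, X ω)) (fun ω => (Z ω, Y ω))) :
    cmi p (F i) Y (Fpre F i) - cmi p (F i) Z (Fpre F i)
      = (cmi p X Y (Fpre F i) - cmi p (Fpre F r) Z (Fpre F i))
        - (cmi p X Y (Fpre F (i + 1)) - cmi p (Fpre F r) Z (Fpre F (i + 1))) := by
  have hY := cmi_eq_sub_of_markov hp h.snd_right
  have hZ := cmi_eq_add_of_determines p (R := Fpre F r) (A := F i) Z (Fpre F i)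
    fun ω ω' hω => (Fpre_eq_iff F).1 hω i i.isLt
  rw [cmi_Fpre_succ] at hY hZ
  linarith

end InfoTheory

/-- Round `i + 1` of the paper is `i : Fin r`, so the paper's odd rounds are those with
`Even (i : ℕ)`, and `a : Fin r` stands for the paper's `a + 1`. -/
theorem sum_cmi_sub_cmi_eq
    {Ω 𝒳₁ 𝒳₂ 𝒵 : Type*} [Fintype Ω] [Fintype 𝒳₁] [DecidableEq 𝒳₁]
    [Fintype 𝒳₂] [DecidableEq 𝒳₂] [Fintype 𝒵] [DecidableEq 𝒵] {r : ℕ}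
    {𝓕 : Fin r → Type*} [∀ i, Fintype (𝓕 i)] [∀ i, DecidableEq (𝓕 i)]
    (p : Ω → ℝ) (hp : IsPMF p)
    (X1 : Ω → 𝒳₁) (X2 : Ω → 𝒳₂) (Z : Ω → 𝒵) (F : ∀ i : Fin r, Ω → 𝓕 i)
    (hMarkov : ∀ i : Fin r,
      (Even (i : ℕ) →
        Markov p (F i) (fun ω => (Fpre F (i : ℕ) ω, X1 ω)) (fun ω => (Z ω, X2 ω))) ∧
      (¬ Even (i : ℕ) →
        Markov p (F i) (fun ω => (Fpre F (i : ℕ) ω, X2 ω)) (fun ω => (Z ω, X1 ω)))) :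
    ∀ a : Fin r,
      ∑ i ∈ Finset.univ.filter (fun i : Fin r => a ≤ i),
          ((if Even (i : ℕ) then cmi p (F i) X2 (Fpre F (i : ℕ))
            else cmi p (F i) X1 (Fpre F (i : ℕ)))
            - cmi p (F i) Z (Fpre F (i : ℕ)))
        = cmi p X1 X2 (Fpre F (a : ℕ)) - cmi p X1 X2 (Fpre F r)
            - cmi p (Fpre F r) Z (Fpre F (a : ℕ)) := by
  intro a
  set g : ℕ → ℝ := fun k => cmi p X1 X2 (Fpre F k) - cmi p (Fpre F r) Z (Fpre F k)
  have hround : ∀ i : Fin r, ((if Even (i : ℕ) then cmi p (F i) X2 (Fpre F (i : ℕ))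
      else cmi p (F i) X1 (Fpre F (i : ℕ))) - cmi p (F i) Z (Fpre F (i : ℕ)))
      = g i - g (i + 1) := by
    intro i
    split_ifs with hi
    · exact cmi_sub_cmi_eq_of_markov hp.1 ((hMarkov i).1 hi)
    · simpa only [cmi_comm p X2 X1] using cmi_sub_cmi_eq_of_markov hp.1 ((hMarkov i).2 hi)
  rw [Finset.sum_congr rfl fun i _ => hround i, Finset.filter_le_eq_Ici, Fin.sum_Ici_sub]
  simp only [g, cmi_eq_zero_of_determines p Z fun _ _ => id]
  ring
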